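/- arXiv:1907.11037 — 6 statements merged into one kernel-verified Lean document; each statement's English description precedes it below -/
import Mathlib

section
/- A compact Hausdorff non-discrete topological group does not admit a transversal group topology. -/
/-!
If `τ ⊓ σ` is discrete, there are a `τ`-neighbourhood `U` and a `σ`-neighbourhood `V` of `1`
with `U ∩ V = {1}`. Shrink `V` to a `σ`-neighbourhood `W` with `W⁻¹ W ⊆ V`; as `σ` is a
non-discrete T₁ group topology, `W` is infinite. Finitely many left translates of a small
`τ`-neighbourhood cover the `τ`-compact group, so by pigeonhole two distinct `a, b ∈ W` satisfy
`a⁻¹ b ∈ U`. Then `a⁻¹ b ∈ U ∩ V = {1}`, a contradiction.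
-/

open Topology

theorem exists_inter_eq_singleton_of_inf_eq_bot {X : Type*} {t₁ t₂ : TopologicalSpace X}
    (h : t₁ ⊓ t₂ = ⊥) (x : X) :
    ∃ U ∈ @nhds X t₁ x, ∃ V ∈ @nhds X t₂ x, U ∩ V = {x} := by
  have hx : ({x} : Set X) ∈ @nhds X t₁ x ⊓ @nhds X t₂ x := by
    rw [← nhds_inf, h]
    exact (@mem_nhds_discrete X ⊥ (discreteTopology_bot X) x {x}).2 rfl
  obtain ⟨U, hU, V, hV, hUV⟩ := Filter.mem_inf_iff.1 hx
  exact ⟨U, hU, V, hV, hUV.symm⟩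

section TopologicalGroup

variable {G : Type*} [Group G] [TopologicalSpace G] [IsTopologicalGroup G]

theorem exists_nhds_one_forall_inv_mul_mem {s : Set G} (hs : s ∈ 𝓝 (1 : G)) :
    ∃ V ∈ 𝓝 (1 : G), ∀ v ∈ V, ∀ w ∈ V, v⁻¹ * w ∈ s := by
  obtain ⟨V, hV, hVs⟩ := exists_nhds_split_inv hs
  refine ⟨V⁻¹, inv_mem_nhds_one G hV, fun v hv w hw => ?_⟩
  simpa using hVs v⁻¹ hv w⁻¹ hw

theorem Set.infinite_of_mem_nhds_one [T1Space G] (hG : ¬ DiscreteTopology G) {W : Set G}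
    (hW : W ∈ 𝓝 (1 : G)) : W.Infinite := fun hfin =>
  hG (discreteTopology_of_isOpen_singleton_one (isOpen_singleton_of_finite_mem_nhds 1 hW hfin))

theorem Set.Infinite.exists_ne_inv_mul_mem [CompactSpace G] {W : Set G} (hW : W.Infinite)
    {U : Set G} (hU : U ∈ 𝓝 (1 : G)) : ∃ a ∈ W, ∃ b ∈ W, a ≠ b ∧ a⁻¹ * b ∈ U := by
  obtain ⟨O, hO, hOU⟩ := exists_nhds_one_forall_inv_mul_mem hU
  obtain ⟨t, ht⟩ := compact_covered_by_mul_left_translates isCompact_univ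
    ⟨1, mem_interior_iff_mem_nhds.2 hO⟩
  have hcover : ∀ a : G, ∃ g ∈ t, g * a ∈ O := fun a => by
    simpa using ht (Set.mem_univ a)
  choose f hft hfO using hcover
  obtain ⟨a, ha, b, hb, hab, hfab⟩ :=
    hW.exists_ne_map_eq_of_mapsTo (fun a _ => hft a) t.finite_toSet
  refine ⟨a, ha, b, hb, hab, ?_⟩
  have hab' := hOU _ (hfO a) _ (hfab ▸ hfO b)
  rwa [mul_inv_rev, mul_assoc, inv_mul_cancel_left] at hab'

end TopologicalGroup

theorem stmt_1_general {G : Type*} [Group G] (τ : TopologicalSpace G)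
    (hτ : @IsTopologicalGroup G τ _) (hc : @CompactSpace G τ) :
    ¬ ∃ σ : TopologicalSpace G,
        @IsTopologicalGroup G σ _ ∧ @T2Space G σ ∧ σ ≠ ⊥ ∧ τ ⊓ σ = ⊥ := by
  rintro ⟨σ, hσ, hσT2, hσnd, hinf⟩
  obtain ⟨U, hU, V, hV, hUV⟩ := exists_inter_eq_singleton_of_inf_eq_bot hinf 1
  obtain ⟨W, hW, hWV⟩ := @exists_nhds_one_forall_inv_mul_mem G _ σ hσ V hV
  have hW_infinite : W.Infinite :=
    @Set.infinite_of_mem_nhds_one G _ σ hσ hσT2.t1Space (fun h => hσnd h.eq_bot) W hW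
  obtain ⟨a, ha, b, hb, hab, habU⟩ :=
    @Set.Infinite.exists_ne_inv_mul_mem G _ τ hτ hc W hW_infinite U hU
  have habV : a⁻¹ * b ∈ ({1} : Set G) := hUV ▸ ⟨habU, hWV a ha b hb⟩
  exact hab (inv_mul_eq_one.mp habV)

/-- A compact Hausdorff non-discrete topological group does not admit a transversal
group topology: there is no non-discrete Hausdorff group topology `σ` with
`τ ⊓ σ = ⊥` (i.e. whose join with `τ` is the discrete topology). -/
theorem stmt_1 {G : Type*} [Group G] (τ : TopologicalSpace G)
    (hτ : @IsTopologicalGroup G τ _) (hc : @CompactSpace G τ) (hT2 : @T2Space G τ)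
    (hnd : τ ≠ ⊥) :
    ¬ ∃ σ : TopologicalSpace G,
        @IsTopologicalGroup G σ _ ∧ @T2Space G σ ∧ σ ≠ ⊥ ∧ τ ⊓ σ = ⊥ :=
  stmt_1_general τ hτ hc
end

section
/- If a topological group G contains a subgroup topologically isomorphic to the discrete group ℤ contained in the center of G, and G is non-discrete Hausdorff, then G admits a transversal group topology, provided G is abelian. (Abelian case: a non-discrete Hausdorff abelian topological group containing an infinite discrete cyclic subgroup admits a transversal group topology.) -/
/-!
The subgroups `⟨g ^ n!⟩` are nested with trivial intersection and are all nontrivial, so they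
form a neighbourhood basis of `1` for a Hausdorff, non-discrete group topology `σ` in which
`⟨g⟩` is open. As `⟨g⟩` is `τ`-discrete, some `τ`-open `U` meets `⟨g⟩` exactly in `1`;
then `{1} = U ∩ ⟨g⟩` is open for the join of `τ` and `σ`, which is therefore discrete.
(Mathlib orders topologies by reverse inclusion, so that join is `τ ⊓ σ`.)
-/

open Topology Set Nat

namespace Subgroup

section DirectedBasis

variable {G ι : Type*} [CommGroup G] [Nonempty ι] (H : ι → Subgroup G)
  (hH : Directed (· ≥ ·) H)

abbrev groupFilterBasisOfDirected : GroupFilterBasis G :=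
  groupFilterBasisOfComm (range fun i ↦ (H i : Set G)) (range_nonempty _)
    (by
      rintro _ _ ⟨i, rfl⟩ ⟨j, rfl⟩
      obtain ⟨k, hki, hkj⟩ := hH i j
      exact ⟨_, ⟨k, rfl⟩, subset_inter hki hkj⟩)
    (by rintro _ ⟨i, rfl⟩; exact (H i).one_mem)
    (by rintro _ ⟨i, rfl⟩; exact ⟨_, ⟨i, rfl⟩, by simp⟩)
    (by rintro _ ⟨i, rfl⟩; exact ⟨_, ⟨i, rfl⟩, fun x hx ↦ (H i).inv_mem hx⟩)

variable {H}

theorem mem_groupFilterBasisOfDirected (i : ι) :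
    (H i : Set G) ∈ groupFilterBasisOfDirected H hH :=
  ⟨i, rfl⟩

theorem isOpen_groupFilterBasisOfDirected (i : ι) :
    IsOpen[(groupFilterBasisOfDirected H hH).topology] (H i : Set G) :=
  let _ := (groupFilterBasisOfDirected H hH).topology
  have := (groupFilterBasisOfDirected H hH).isTopologicalGroup
  (H i).isOpen_of_mem_nhds <|
    (groupFilterBasisOfDirected H hH).mem_nhds_one (mem_groupFilterBasisOfDirected hH i)

theorem t2Space_groupFilterBasisOfDirected (h : ∀ x, (∀ i, x ∈ H i) → x = 1) :
    @T2Space G (groupFilterBasisOfDirected H hH).topology := by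
  let _ := (groupFilterBasisOfDirected H hH).topology
  rw [GroupFilterBasis.t2Space_iff_sInter_subset _ rfl]
  intro x hx
  exact h x fun i ↦ hx _ (mem_groupFilterBasisOfDirected hH i)

theorem groupFilterBasisOfDirected_topology_ne_bot (h : ∀ i, H i ≠ ⊥) :
    (groupFilterBasisOfDirected H hH).topology ≠ ⊥ := by
  intro hbot
  let _ := (groupFilterBasisOfDirected H hH).topology
  have : DiscreteTopology G := ⟨hbot⟩
  have : ({1} : Set G) ∈ 𝓝 1 := isOpen_discrete _ |>.mem_nhds rfl
  obtain ⟨_, ⟨i, rfl⟩, hi⟩ :=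
    (groupFilterBasisOfDirected H hH).nhds_one_hasBasis.mem_iff.mp this
  exact h i ((eq_bot_iff_forall _).mpr hi)

end DirectedBasis

section FactorialPowers

variable {G : Type*} [Group G]

theorem zpowers_pow_factorial_antitone (g : G) : Antitone fun n ↦ zpowers (g ^ n !) :=
  fun _ _ hnm ↦ zpowers_le.mpr <| by
    obtain ⟨k, hk⟩ := Nat.factorial_dvd_factorial hnm
    rw [hk, pow_mul]
    exact (zpowers _).pow_mem (mem_zpowers _) k

variable {g : G}

theorem dvd_of_zpow_mem_zpowers_pow (hg : ¬IsOfFinOrder g) {m : ℤ} {k : ℕ}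
    (h : g ^ m ∈ zpowers (g ^ k)) : (k : ℤ) ∣ m := by
  obtain ⟨j, hj⟩ := mem_zpowers_iff.mp h
  rw [← zpow_natCast, ← zpow_mul] at hj
  exact ⟨j, (injective_zpow_iff_not_isOfFinOrder.mpr hg hj).symm⟩

theorem eq_one_of_forall_mem_zpowers_pow_factorial (hg : ¬IsOfFinOrder g) {x : G}
    (hx : ∀ n, x ∈ zpowers (g ^ n !)) : x = 1 := by
  obtain ⟨m, rfl⟩ := mem_zpowers_iff.mp (by simpa using hx 0)
  have hdvd := dvd_of_zpow_mem_zpowers_pow hg (hx (m.natAbs + 1))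
  have : m = 0 := Int.eq_zero_of_dvd_of_natAbs_lt_natAbs hdvd <| by
    simpa using (Nat.lt_succ_self _).trans_le (Nat.self_le_factorial _)
  simp [this]

theorem zpowers_pow_factorial_ne_bot (hg : ¬IsOfFinOrder g) (n : ℕ) :
    zpowers (g ^ n !) ≠ ⊥ := by
  rw [Ne, zpowers_eq_bot]
  exact fun h ↦ hg (isOfFinOrder_iff_pow_eq_one.mpr ⟨n !, n.factorial_pos, h⟩)

end FactorialPowers

end Subgroup

theorem inf_eq_bot_of_discreteTopology_of_isOpen {G : Type*} [Group G]
    {τ σ : TopologicalSpace G} (hτ : @IsTopologicalGroup G τ _)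
    (hσ : @IsTopologicalGroup G σ _) (H : Subgroup G)
    (hHτ : @DiscreteTopology H (τ.induced (↑)))
    (hHσ : IsOpen[σ] (H : Set G)) : τ ⊓ σ = ⊥ := by
  obtain ⟨U, hU, hUH⟩ := (@discreteTopology_subtype_iff' G τ _).mp hHτ 1 H.one_mem
  let _ := τ ⊓ σ
  have := topologicalGroup_inf hτ hσ
  have h1 : IsOpen (U ∩ H) := (hU.mono inf_le_left).inter (hHσ.mono inf_le_right)
  rw [hUH] at h1
  exact (discreteTopology_of_isOpen_singleton_one h1).eq_bot

theorem stmt_2_general {G : Type*} [CommGroup G] [τ : TopologicalSpace G]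
    [IsTopologicalGroup G] (g : G) (hg : ¬ IsOfFinOrder g)
    (hdisc : DiscreteTopology (Subgroup.zpowers g)) :
    ∃ σ : TopologicalSpace G,
      @IsTopologicalGroup G σ _ ∧ @T2Space G σ ∧ σ ≠ ⊥ ∧ τ ⊓ σ = ⊥ := by
  have hH := (Subgroup.zpowers_pow_factorial_antitone g).directed_ge
  let B := Subgroup.groupFilterBasisOfDirected _ hH
  refine ⟨B.topology, B.isTopologicalGroup,
    Subgroup.t2Space_groupFilterBasisOfDirected hH fun _ ↦
      Subgroup.eq_one_of_forall_mem_zpowers_pow_factorial hg,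
    Subgroup.groupFilterBasisOfDirected_topology_ne_bot hH
      (Subgroup.zpowers_pow_factorial_ne_bot hg),
    inf_eq_bot_of_discreteTopology_of_isOpen ‹_› B.isTopologicalGroup _ hdisc ?_⟩
  simpa using Subgroup.isOpen_groupFilterBasisOfDirected hH 0

/-- A non-discrete Hausdorff abelian topological group containing an element of
infinite order generating a discrete cyclic subgroup admits a transversal group
topology (a non-discrete Hausdorff group topology `σ` with `τ ⊓ σ = ⊥`). -/
theorem stmt_2 {G : Type*} [CommGroup G] [τ : TopologicalSpace G]
    [IsTopologicalGroup G] [T2Space G] (hnd : τ ≠ ⊥)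
    (g : G) (hg : ¬ IsOfFinOrder g)
    (hdisc : DiscreteTopology (Subgroup.zpowers g)) :
    ∃ σ : TopologicalSpace G,
      @IsTopologicalGroup G σ _ ∧ @T2Space G σ ∧ σ ≠ ⊥ ∧ τ ⊓ σ = ⊥ :=
  stmt_2_general (τ := τ) g hg hdisc
end

section
/- Every locally precompact Hausdorff topological group embeds as a dense topological subgroup of a locally compact Hausdorff group (Weil's theorem). -/
/-!
Complete `G` for its two-sided (Raikov) uniformity, the infimum of the left and right
uniformities. Multiplication is not uniformly continuous for it, but it still maps pairs of
Cauchy filters to Cauchy filters: for the left uniformity this comes from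
`(ab)⁻¹(a'b') = (b₀⁻¹b)⁻¹ · b₀⁻¹(a⁻¹a')b₀ · (b₀⁻¹b')` with `b₀` fixed, and symmetrically on the
right. Inversion is uniformly continuous because it swaps the two one-sided uniformities. Hence
the group operations extend to the completion, which becomes a Hausdorff topological group
containing `G` as a dense subgroup. A precompact neighbourhood `U` of `1` is totally bounded in
both one-sided uniformities, so the closure of its image is a compact neighbourhood of `1`.
-/

open scoped Pointwise Uniformity
open Filter Set Topology UniformSpace Function

lemma totallyBounded_inf_uniformSpace {α : Type*} {u v : UniformSpace α} {s : Set α} :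
    TotallyBounded (uniformSpace := u ⊓ v) s ↔
      TotallyBounded (uniformSpace := u) s ∧ TotallyBounded (uniformSpace := v) s := by
  simp only [@totallyBounded_iff_ultrafilter _ (u ⊓ v), @totallyBounded_iff_ultrafilter _ u,
    @totallyBounded_iff_ultrafilter _ v]
  exact ⟨fun h => ⟨fun f hf => (cauchy_inf_uniformSpace.1 (h f hf)).1,
    fun f hf => (cauchy_inf_uniformSpace.1 (h f hf)).2⟩,
    fun h f hf => cauchy_inf_uniformSpace.2 ⟨h.1 f hf, h.2 f hf⟩⟩

lemma exists_mem_nhds_forall_mem₃ {X Y : Type*} [TopologicalSpace X] [TopologicalSpace Y]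
    {f : X → X → X → Y} {x : X}
    (hf : ContinuousAt (fun p : X × X × X => f p.1 p.2.1 p.2.2) (x, x, x))
    {V : Set Y} (hV : V ∈ 𝓝 (f x x x)) :
    ∃ W ∈ 𝓝 x, ∀ a ∈ W, ∀ b ∈ W, ∀ c ∈ W, f a b c ∈ V := by
  have h := hf.preimage_mem_nhds hV
  rw [nhds_prod_eq, nhds_prod_eq] at h
  obtain ⟨A, hA, BC, hBC, hABC⟩ := mem_prod_iff.1 h
  obtain ⟨B, hB, C, hC, hBC⟩ := mem_prod_iff.1 hBC
  exact ⟨A ∩ B ∩ C, inter_mem (inter_mem hA hB) hC, fun a ha b hb c hc =>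
    hABC (mk_mem_prod ha.1.1 (hBC (mk_mem_prod hb.1.2 hc.2)))⟩

lemma UniformSpace.Completion.cauchy_comap_coe_nhds {α : Type*} [UniformSpace α]
    (x : Completion α) : Cauchy (Filter.comap ((↑) : α → Completion α) (𝓝 x)) :=
  haveI := isDenseInducing_coe.comap_nhds_neBot x
  cauchy_nhds.comap (comap_coe_eq_uniformity α).le

section OneSided

variable {G : Type*} [UniformSpace G] [Group G]

namespace IsLeftUniformGroup

variable [IsLeftUniformGroup G]

lemma uniformity_hasBasis :
    (𝓤 G).HasBasis (· ∈ 𝓝 (1 : G)) fun V => {p | p.1⁻¹ * p.2 ∈ V} := by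
  rw [uniformity_eq_comap_inv_mul_nhds_one]
  exact (𝓝 (1 : G)).basis_sets.comap _

theorem cauchy_mul {F H : Filter G} (hF : Cauchy F) (hH : Cauchy H) : Cauchy (F * H) := by
  rw [uniformity_hasBasis.cauchy_iff] at hF hH ⊢
  obtain ⟨hFne, hF⟩ := hF
  obtain ⟨hHne, hH⟩ := hH
  refine ⟨hFne.mul hHne, fun V hV => ?_⟩
  obtain ⟨W, hW, hWV⟩ : ∃ W ∈ 𝓝 (1 : G), ∀ x ∈ W, ∀ y ∈ W, ∀ z ∈ W, x⁻¹ * y * z ∈ V :=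
    exists_mem_nhds_forall_mem₃ (f := fun x y z : G => x⁻¹ * y * z) (by fun_prop)
      (by simpa using hV)
  obtain ⟨B, hB, hBW⟩ := hH W hW
  obtain ⟨b₀, hb₀⟩ := hHne.nonempty_of_mem hB
  have hconj : (fun g => b₀⁻¹ * g * b₀) ⁻¹' W ∈ 𝓝 (1 : G) :=
    (by fun_prop : Continuous fun g => b₀⁻¹ * g * b₀).continuousAt.preimage_mem_nhds
      (by simpa using hW)
  obtain ⟨A, hA, hAW⟩ := hF _ hconj
  refine ⟨A * B, mul_mem_mul hA hB, ?_⟩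
  rintro _ ⟨a, ha, b, hb, rfl⟩ _ ⟨a', ha', b', hb', rfl⟩
  have key : (a * b)⁻¹ * (a' * b') = (b₀⁻¹ * b)⁻¹ * (b₀⁻¹ * (a⁻¹ * a') * b₀) * (b₀⁻¹ * b') := by
    group
  show (a * b)⁻¹ * (a' * b') ∈ V
  rw [key]
  exact hWV _ (hBW _ hb₀ _ hb) _ (hAW _ ha _ ha') _ (hBW _ hb₀ _ hb')

theorem totallyBounded_of_forall_subset_mul {s : Set G}
    (h : ∀ V ∈ 𝓝 (1 : G), ∃ t : Set G, t.Finite ∧ s ⊆ t * V) : TotallyBounded s := by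
  rw [uniformity_hasBasis.totallyBounded_iff]
  intro V hV
  obtain ⟨t, ht, hst⟩ := h V⁻¹ (inv_mem_nhds_one G hV)
  refine ⟨t, ht, fun x hx => ?_⟩
  obtain ⟨y, hy, v, hv, rfl⟩ := hst hx
  exact mem_iUnion₂.2 ⟨y, hy, by simpa [mul_assoc] using hv⟩

end IsLeftUniformGroup

namespace IsRightUniformGroup

variable [IsRightUniformGroup G]

lemma uniformity_hasBasis :
    (𝓤 G).HasBasis (· ∈ 𝓝 (1 : G)) fun V => {p | p.2 * p.1⁻¹ ∈ V} := by
  rw [uniformity_eq_comap_mul_inv_nhds_one]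
  exact (𝓝 (1 : G)).basis_sets.comap _

theorem cauchy_mul {F H : Filter G} (hF : Cauchy F) (hH : Cauchy H) : Cauchy (F * H) := by
  rw [uniformity_hasBasis.cauchy_iff] at hF hH ⊢
  obtain ⟨hFne, hF⟩ := hF
  obtain ⟨hHne, hH⟩ := hH
  refine ⟨hFne.mul hHne, fun V hV => ?_⟩
  obtain ⟨W, hW, hWV⟩ : ∃ W ∈ 𝓝 (1 : G), ∀ x ∈ W, ∀ y ∈ W, ∀ z ∈ W, x * y * z⁻¹ ∈ V :=
    exists_mem_nhds_forall_mem₃ (f := fun x y z : G => x * y * z⁻¹) (by fun_prop)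
      (by simpa using hV)
  obtain ⟨A, hA, hAW⟩ := hF W hW
  obtain ⟨a₀, ha₀⟩ := hFne.nonempty_of_mem hA
  have hconj : (fun g => a₀ * g * a₀⁻¹) ⁻¹' W ∈ 𝓝 (1 : G) :=
    (by fun_prop : Continuous fun g => a₀ * g * a₀⁻¹).continuousAt.preimage_mem_nhds
      (by simpa using hW)
  obtain ⟨B, hB, hBW⟩ := hH _ hconj
  refine ⟨A * B, mul_mem_mul hA hB, ?_⟩
  rintro _ ⟨a, ha, b, hb, rfl⟩ _ ⟨a', ha', b', hb', rfl⟩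
  have key : a' * b' * (a * b)⁻¹ = (a' * a₀⁻¹) * (a₀ * (b' * b⁻¹) * a₀⁻¹) * (a * a₀⁻¹)⁻¹ := by
    group
  show a' * b' * (a * b)⁻¹ ∈ V
  rw [key]
  exact hWV _ (hAW _ ha₀ _ ha') _ (hBW _ hb _ hb') _ (hAW _ ha₀ _ ha)

theorem totallyBounded_of_forall_subset_mul {s : Set G}
    (h : ∀ V ∈ 𝓝 (1 : G), ∃ t : Set G, t.Finite ∧ s ⊆ V * t) : TotallyBounded s := by
  rw [uniformity_hasBasis.totallyBounded_iff]
  intro V hV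
  obtain ⟨t, ht, hst⟩ := h V⁻¹ (inv_mem_nhds_one G hV)
  refine ⟨t, ht, fun x hx => ?_⟩
  obtain ⟨v, hv, y, hy, rfl⟩ := hst hx
  exact mem_iUnion₂.2 ⟨y, hy, by simpa [mul_assoc] using hv⟩

end IsRightUniformGroup

end OneSided

namespace IsTopologicalGroup

variable (G : Type*) [Group G] [TopologicalSpace G] [IsTopologicalGroup G]

abbrev twoSidedUniformSpace : UniformSpace G :=
  (leftUniformSpace G ⊓ rightUniformSpace G).replaceTopology (inf_idem _).symm

lemma twoSidedUniformSpace_eq :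
    twoSidedUniformSpace G = leftUniformSpace G ⊓ rightUniformSpace G :=
  UniformSpace.replaceTopology_eq _ _

lemma isLeftUniformGroup_leftUniformSpace : @IsLeftUniformGroup G (leftUniformSpace G) _ :=
  @IsLeftUniformGroup.mk G (leftUniformSpace G) _ ‹_› rfl

lemma isRightUniformGroup_rightUniformSpace : @IsRightUniformGroup G (rightUniformSpace G) _ :=
  @IsRightUniformGroup.mk G (rightUniformSpace G) _ ‹_› rfl

variable {G}

attribute [local instance] twoSidedUniformSpace

lemma cauchy_twoSidedUniformSpace_iff {F : Filter G} :
    Cauchy F ↔ Cauchy (uniformSpace := leftUniformSpace G) F ∧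
      Cauchy (uniformSpace := rightUniformSpace G) F := by
  rw [← cauchy_inf_uniformSpace, ← twoSidedUniformSpace_eq]

theorem twoSidedUniformSpace_cauchy_mul {F H : Filter G} (hF : Cauchy F) (hH : Cauchy H) :
    Cauchy (F * H) := by
  rw [cauchy_twoSidedUniformSpace_iff] at hF hH ⊢
  exact ⟨@IsLeftUniformGroup.cauchy_mul G (leftUniformSpace G) _
      (isLeftUniformGroup_leftUniformSpace G) F H hF.1 hH.1,
    @IsRightUniformGroup.cauchy_mul G (rightUniformSpace G) _
      (isRightUniformGroup_rightUniformSpace G) F H hF.2 hH.2⟩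

theorem twoSidedUniformSpace_uniformContinuous_inv : UniformContinuous fun x : G => x⁻¹ := by
  rw [twoSidedUniformSpace_eq]
  exact .inf_rng
    (.inf_dom_right (@UniformEquiv.uniformContinuous _ _ (_) (_) (UniformEquiv.inv G)))
    (.inf_dom_left (@UniformEquiv.uniformContinuous _ _ (_) (_)
      (@UniformEquiv.symm _ _ (_) (_) (UniformEquiv.inv G))))

theorem twoSidedUniformSpace_totallyBounded_of_precompact {U : Set G}
    (h : ∀ V ∈ 𝓝 (1 : G), ∃ F : Set G, F.Finite ∧ U ⊆ F * V ∧ U ⊆ V * F) :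
    TotallyBounded U := by
  rw [twoSidedUniformSpace_eq]
  exact totallyBounded_inf_uniformSpace.2
    ⟨@IsLeftUniformGroup.totallyBounded_of_forall_subset_mul G (leftUniformSpace G) _
      (isLeftUniformGroup_leftUniformSpace G) U
      fun V hV => (h V hV).imp fun _ hF => ⟨hF.1, hF.2.1⟩,
    @IsRightUniformGroup.totallyBounded_of_forall_subset_mul G (rightUniformSpace G) _
      (isRightUniformGroup_rightUniformSpace G) U
      fun V hV => (h V hV).imp fun _ hF => ⟨hF.1, hF.2.2⟩⟩

end IsTopologicalGroup

open IsTopologicalGroup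

abbrev RaikovCompletion (G : Type*) [Group G] [TopologicalSpace G] [IsTopologicalGroup G] :
    Type _ :=
  @Completion G (twoSidedUniformSpace G)

noncomputable section

namespace RaikovCompletion

attribute [local instance] twoSidedUniformSpace

variable {G : Type*} [Group G] [TopologicalSpace G] [IsTopologicalGroup G]

lemma isDenseInducing_coe_prodMap :
    IsDenseInducing (Prod.map ((↑) : G → RaikovCompletion G) ((↑) : G → RaikovCompletion G)) :=
  Completion.isDenseInducing_coe.prodMap Completion.isDenseInducing_coe

lemma exists_tendsto_coe_mul (x : RaikovCompletion G × RaikovCompletion G) :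
    ∃ z, Tendsto (fun p : G × G => ((p.1 * p.2 : G) : RaikovCompletion G))
      (comap (Prod.map (↑) (↑)) (𝓝 x)) (𝓝 z) := by
  obtain ⟨x₁, x₂⟩ := x
  have hcauchy := (twoSidedUniformSpace_cauchy_mul (Completion.cauchy_comap_coe_nhds x₁)
    (Completion.cauchy_comap_coe_nhds x₂)).map (Completion.uniformContinuous_coe G)
  rw [← map₂_mul, ← map_prod_eq_map₂, map_map, prod_comap_comap_eq, ← nhds_prod_eq] at hcauchy
  exact CompleteSpace.complete hcauchy

instance : Mul (RaikovCompletion G) :=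
  ⟨fun x y => isDenseInducing_coe_prodMap.extend
    (fun p : G × G => ((p.1 * p.2 : G) : RaikovCompletion G)) (x, y)⟩

instance : One (RaikovCompletion G) := ⟨((1 : G) : RaikovCompletion G)⟩

instance : Inv (RaikovCompletion G) := ⟨Completion.map fun x : G => x⁻¹⟩

instance : ContinuousMul (RaikovCompletion G) :=
  ⟨isDenseInducing_coe_prodMap.continuous_extend exists_tendsto_coe_mul⟩

instance : ContinuousInv (RaikovCompletion G) := ⟨Completion.continuous_map⟩

lemma coe_mul (a b : G) : ((a * b : G) : RaikovCompletion G) = a * b :=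
  (isDenseInducing_coe_prodMap.extend_eq
    ((Completion.continuous_coe G).comp continuous_mul) (a, b)).symm

lemma coe_one : ((1 : G) : RaikovCompletion G) = 1 := rfl

lemma coe_inv (a : G) : ((a⁻¹ : G) : RaikovCompletion G) = (a : RaikovCompletion G)⁻¹ :=
  (Completion.map_coe twoSidedUniformSpace_uniformContinuous_inv a).symm

instance : Group (RaikovCompletion G) := by
  refine Group.ofLeftAxioms (fun x y z => ?_) (fun x => ?_) (fun x => ?_)
  · refine Completion.induction_on₃ x y z (isClosed_eq (by fun_prop) (by fun_prop))
      fun a b c => ?_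
    simp only [← coe_mul, mul_assoc]
  · refine Completion.induction_on x (isClosed_eq (by fun_prop) (by fun_prop)) fun a => ?_
    rw [← coe_one, ← coe_mul, one_mul]
  · refine Completion.induction_on x (isClosed_eq (by fun_prop) (by fun_prop)) fun a => ?_
    rw [← coe_inv, ← coe_mul, inv_mul_cancel, coe_one]

instance : IsTopologicalGroup (RaikovCompletion G) where

def coeHom : G →* RaikovCompletion G where
  toFun := (↑)
  map_one' := coe_one
  map_mul' := coe_mul

lemma isDenseInducing_coeHom : IsDenseInducing (coeHom : G →* RaikovCompletion G) :=
  Completion.isDenseInducing_coe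

lemma coeHom_injective [T0Space G] : Injective (coeHom : G →* RaikovCompletion G) :=
  Completion.coe_injective G

theorem locallyCompactSpace_of_totallyBounded {U : Set G} (hU : U ∈ 𝓝 (1 : G))
    (htb : TotallyBounded U) : LocallyCompactSpace (RaikovCompletion G) := by
  have hK : IsCompact (closure (((↑) : G → RaikovCompletion G) '' U)) :=
    (htb.image (Completion.uniformContinuous_coe G)).closure.isCompact_of_isClosed
      isClosed_closure
  exact hK.locallyCompactSpace_of_mem_nhds_of_group
    (Completion.isDenseInducing_coe.closure_image_mem_nhds hU)

end RaikovCompletion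

end

/-- Weil's theorem: every locally precompact Hausdorff topological group embeds,
via an injective continuous open-onto-its-image group homomorphism (an inducing
map), as a dense subgroup of some locally compact Hausdorff topological group. -/
theorem stmt_6 {G : Type u} [Group G] [TopologicalSpace G] [IsTopologicalGroup G]
    [T2Space G]
    (hlp : ∃ U ∈ nhds (1 : G), ∀ V ∈ nhds (1 : G),
      ∃ F : Set G, F.Finite ∧ U ⊆ F * V ∧ U ⊆ V * F) :
    ∃ (H : Type u) (_ : Group H) (_ : TopologicalSpace H)
      (_ : IsTopologicalGroup H) (_ : T2Space H) (_ : LocallyCompactSpace H)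
      (f : G →* H), Topology.IsInducing f ∧ Function.Injective f ∧ DenseRange f := by
  obtain ⟨U, hU, hprec⟩ := hlp
  exact ⟨RaikovCompletion G, inferInstance, inferInstance, inferInstance, inferInstance,
    RaikovCompletion.locallyCompactSpace_of_totallyBounded hU
      (twoSidedUniformSpace_totallyBounded_of_precompact hprec),
    RaikovCompletion.coeHom, RaikovCompletion.isDenseInducing_coeHom.isInducing,
    RaikovCompletion.coeHom_injective, RaikovCompletion.isDenseInducing_coeHom.dense⟩
end

section
/- Every pseudocompact Tychonoff space without isolated points has cardinality at least 𝔠 (the cardinality of the continuum). -/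
open Set Topology Filter unitInterval

section Aux

variable {X : Type*} [TopologicalSpace X] [T2Space X] [CompletelyRegularSpace X]

/-- Shrinking: in a regular space, a point in an open set has an open nbhd with closure inside. -/
lemma aux_shrink (x : X) (O : Set X) (hO : IsOpen O) (hx : x ∈ O) :
    ∃ V : Set X, IsOpen V ∧ x ∈ V ∧ closure V ⊆ O := by
  obtain ⟨t, ht, htc, hts⟩ := exists_mem_nhds_isClosed_subset (hO.mem_nhds hx)
  exact ⟨interior t, isOpen_interior, mem_interior_iff_mem_nhds.2 ht,
    (closure_minimal interior_subset htc).trans hts⟩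

/-- Splitting: every nonempty open set contains two open sets with disjoint closures
inside it, assuming no isolated points. -/
lemma aux_split (hni : ∀ x : X, (nhdsWithin x {x}ᶜ).NeBot) (S : Set X)
    (hS : IsOpen S) (hne : S.Nonempty) :
    ∃ V : Bool → Set X, (∀ b, IsOpen (V b)) ∧ (∀ b, (V b).Nonempty) ∧
      (∀ b, closure (V b) ⊆ S) ∧ Disjoint (closure (V false)) (closure (V true)) := by
  obtain ⟨a, ha⟩ := hne
  have : (S ∩ {a}ᶜ).Nonempty := by
    have := hni a
    have hmem : S ∈ nhdsWithin a {a}ᶜ := mem_nhdsWithin_of_mem_nhds (hS.mem_nhds ha)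
    obtain ⟨b, hbS, hb⟩ := (Filter.nonempty_of_mem (inter_mem hmem self_mem_nhdsWithin) :
      (S ∩ {a}ᶜ).Nonempty)
    exact ⟨b, hbS, hb⟩
  obtain ⟨b, hbS, hba⟩ := this
  have hba' : b ≠ a := hba
  obtain ⟨Wb, Wa, hWbo, hWao, hbW, haW, hdisj⟩ := t2_separation hba'
  obtain ⟨Va, hVao, haVa, haVacl⟩ := aux_shrink a (S ∩ Wa) (hS.inter hWao) ⟨ha, haW⟩
  obtain ⟨Vb, hVbo, hbVb, hbVbcl⟩ := aux_shrink b (S ∩ Wb) (hS.inter hWbo) ⟨hbS, hbW⟩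
  refine ⟨fun c => if c then Vb else Va, ?_, ?_, ?_, ?_⟩
  · rintro (_|_) <;> simpa
  · rintro (_|_)
    · exact ⟨a, haVa⟩
    · exact ⟨b, hbVb⟩
  · rintro (_|_)
    · exact fun x hx => ((haVacl hx).1)
    · exact fun x hx => ((hbVbcl hx).1)
  · simp only [if_false, if_true]
    refine Set.disjoint_left.2 fun x hxa hxb => ?_
    exact hdisj.le_bot ⟨(hbVbcl hxb).2, (haVacl hxa).2⟩

/-- Key lemma: in a pseudocompact (completely regular) space, a decreasing sequence of
nonempty open sets with `closure (G (n+1)) ⊆ G n` has nonempty intersection of closures. -/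
lemma aux_pseudocompact (hpc : ∀ f : X → ℝ, Continuous f → Bornology.IsBounded (Set.range f))
    (G : ℕ → Set X) (ho : ∀ n, IsOpen (G n)) (hne : ∀ n, (G n).Nonempty)
    (hcl : ∀ n, closure (G (n + 1)) ⊆ G n) :
    (⋂ n, closure (G n)).Nonempty := by
  by_contra hempty
  rw [Set.not_nonempty_iff_eq_empty] at hempty
  -- monotonicity
  have hmono : ∀ {m n : ℕ}, m ≤ n → G n ⊆ G m := by
    intro m n hmn
    induction hmn with
    | refl => exact le_refl _
    | step h ih => exact (subset_closure.trans (hcl _)).trans ih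
  -- choose points
  choose x hx using hne
  -- choose Urysohn-type functions
  have hg : ∀ n : ℕ, ∃ g : X → I, Continuous g ∧ g (x n) = 0 ∧ EqOn g 1 (G n)ᶜ := fun n =>
    CompletelyRegularSpace.completely_regular (x n) (G n)ᶜ (ho n).isClosed_compl
      (by simpa using hx n)
  choose g hgc hgx hgK using hg
  set f : ℕ → X → ℝ := fun n y => (n : ℝ) * (1 - (g n y : ℝ)) with hf
  have hfc : ∀ n, Continuous (f n) := fun n =>
    (continuous_const.mul (continuous_const.sub (continuous_subtype_val.comp (hgc n))))
  have hsupp : ∀ n, Function.support (f n) ⊆ G n := by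
    intro n y hy
    by_contra hyG
    apply hy
    simp only [hf]
    have : g n y = 1 := hgK n hyG
    rw [this]
    norm_num
  -- locally finite supports
  have hlf : LocallyFinite fun n => Function.support (f n) := by
    intro y
    have hy : y ∉ ⋂ n, closure (G n) := by rw [hempty]; exact notMem_empty y
    rw [mem_iInter] at hy
    push_neg at hy
    obtain ⟨m, hm⟩ := hy
    refine ⟨(closure (G m))ᶜ, (isClosed_closure.isOpen_compl).mem_nhds hm, ?_⟩
    apply Set.Finite.subset (Set.finite_Iio m)
    intro n hn
    by_contra hnm
    simp only [Set.mem_Iio, not_lt] at hnm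
    obtain ⟨z, hz1, hz2⟩ := hn
    exact hz2 (subset_closure (hmono hnm (hsupp n hz1)))
  set F : X → ℝ := fun y => ∑ᶠ n, f n y with hF
  have hFc : Continuous F := continuous_finsum hfc hlf
  have hfnonneg : ∀ n y, 0 ≤ f n y := by
    intro n y
    apply mul_nonneg (Nat.cast_nonneg n)
    have := (g n y).2.2
    linarith
  have hFge : ∀ m : ℕ, (m : ℝ) ≤ F (x m) := by
    intro m
    have hfin : (Function.support fun n => f n (x m)).Finite := hlf.point_finite (x m)
    have := single_le_finsum m hfin (fun n => hfnonneg n (x m))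
    have hfm : f m (x m) = m := by
      simp only [hf, hgx m]
      norm_num
    rw [hfm] at this
    exact this
  obtain ⟨C, hC⟩ := isBounded_iff_forall_norm_le.1 (hpc F hFc)
  obtain ⟨m, hm⟩ := exists_nat_gt C
  have h1 : ‖F (x m)‖ ≤ C := hC _ (mem_range_self _)
  have h2 : (m : ℝ) ≤ F (x m) := hFge m
  have : (m : ℝ) ≤ C := le_trans h2 ((le_abs_self _).trans h1)
  linarith

end Aux

/-- Every nonempty pseudocompact Tychonoff (completely regular Hausdorff) space
without isolated points has cardinality at least the continuum. -/
theorem stmt_10 {X : Type*} [TopologicalSpace X] [T2Space X]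
    [CompletelyRegularSpace X] [Nonempty X]
    (hpc : ∀ f : X → ℝ, Continuous f → Bornology.IsBounded (Set.range f))
    (hni : ∀ x : X, (nhdsWithin x {x}ᶜ).NeBot) :
    Cardinal.continuum ≤ Cardinal.mk X := by
  classical
  -- picking function
  have split := aux_split (X := X) hni
  let pick : Set X → Bool → Set X := fun S b =>
    if h : IsOpen S ∧ S.Nonempty then (split S h.1 h.2).choose b else ∅
  have pick_spec : ∀ (S : Set X), IsOpen S → S.Nonempty →
      (∀ b, IsOpen (pick S b)) ∧ (∀ b, (pick S b).Nonempty) ∧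
      (∀ b, closure (pick S b) ⊆ S) ∧
      Disjoint (closure (pick S false)) (closure (pick S true)) := by
    intro S hS hne
    have h : IsOpen S ∧ S.Nonempty := ⟨hS, hne⟩
    simp only [pick, dif_pos h]
    exact (split S h.1 h.2).choose_spec
  -- the tree
  let T : ℕ → (ℕ → Bool) → Set X := fun n => Nat.rec (fun _ => Set.univ)
    (fun k ih c1 => pick (ih c1) (c1 k)) n
  have hT0 : ∀ c1, T 0 c1 = Set.univ := fun _ => rfl
  have hTsucc : ∀ n c1, T (n + 1) c1 = pick (T n c1) (c1 n) := fun _ _ => rfl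
  -- basic properties
  have hTprop : ∀ n c1, IsOpen (T n c1) ∧ (T n c1).Nonempty := by
    intro n c1
    induction n with
    | zero => exact ⟨isOpen_univ, univ_nonempty⟩
    | succ k ih =>
      obtain ⟨h1, h2, _, _⟩ := pick_spec (T k c1) ih.1 ih.2
      exact ⟨h1 _, h2 _⟩
  have hTcl : ∀ n c1, closure (T (n + 1) c1) ⊆ T n c1 := by
    intro n c1
    obtain ⟨_, _, h3, _⟩ := pick_spec (T n c1) (hTprop n c1).1 (hTprop n c1).2
    exact h3 _
  -- T n c1 depends only on c1 below n
  have hTcongr : ∀ n (c1 c2 : ℕ → Bool), (∀ k < n, c1 k = c2 k) → T n c1 = T n c2 := by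
    intro n
    induction n with
    | zero => intro _ _ _; rfl
    | succ k ih =>
      intro c1 c2 h
      rw [hTsucc, hTsucc, ih c1 c2 (fun j hj => h j (Nat.lt_succ_of_lt hj)),
        h k (Nat.lt_succ_self k)]
  -- pick a point in each branch
  have hbranch : ∀ c1 : ℕ → Bool, (⋂ n, closure (T n c1)).Nonempty := fun c1 =>
    aux_pseudocompact hpc (fun n => T n c1) (fun n => (hTprop n c1).1)
      (fun n => (hTprop n c1).2) (fun n => hTcl n c1)
  choose p hp using hbranch
  -- injectivity
  have hinj : Function.Injective p := by
    intro c1 c2 hpq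
    by_contra hne
    have : ∃ n, c1 n ≠ c2 n := by
      by_contra h
      push_neg at h
      exact hne (funext h)
    set n := Nat.find this with hn_def
    have hn : c1 n ≠ c2 n := Nat.find_spec this
    have heq : ∀ k < n, c1 k = c2 k := fun k hk => not_not.mp (Nat.find_min this hk)
    have hTeq : T n c1 = T n c2 := hTcongr n c1 c2 heq
    obtain ⟨_, _, _, hdisj⟩ := pick_spec (T n c2) (hTprop n c2).1 (hTprop n c2).2
    have hpc1 : p c1 ∈ closure (T (n + 1) c1) := (mem_iInter.1 (hp c1)) (n + 1)
    have hpc2 : p c2 ∈ closure (T (n + 1) c2) := (mem_iInter.1 (hp c2)) (n + 1)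
    rw [hTsucc] at hpc1 hpc2
    rw [hTeq] at hpc1
    rw [hpq] at hpc1
    cases hb1 : c1 n <;> cases hb2 : c2 n
    · exact hn (hb1.trans hb2.symm)
    · rw [hb1] at hpc1; rw [hb2] at hpc2; exact hdisj.le_bot ⟨hpc1, hpc2⟩
    · rw [hb1] at hpc1; rw [hb2] at hpc2; exact hdisj.le_bot ⟨hpc2, hpc1⟩
    · exact hn (hb1.trans hb2.symm)
  have h1 : Cardinal.mk (ℕ → Bool) = Cardinal.continuum.{0} := by
    rw [← Cardinal.power_def, Cardinal.mk_bool, Cardinal.mk_nat, Cardinal.two_power_aleph0]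
  have h2 := Cardinal.lift_mk_le'.mpr ⟨⟨p, hinj⟩⟩
  rw [h1, Cardinal.lift_continuum, Cardinal.lift_uzero] at h2
  exact h2
end

section
/- If G is a subgroup of an abelian group H such that Soc(G) is dense in Soc(H) (closures taken in a given group topology on H), and K is a divisible subgroup of G, then Soc(G/K) is dense in Soc(H/K) with respect to the quotient topology. -/
/-- The socle of an abelian group restricted to a subset `S`: the elements of `S`
of squarefree finite order (this set of elements of `S` generates, and in fact
equals, the underlying set of `Soc(S) = ⊕ₚ S[p]` when `S` is a subgroup). -/
def socSet {H : Type*} [AddCommGroup H] (S : Set H) : Set H :=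
  {x ∈ S | ∃ n : ℕ, 0 < n ∧ Squarefree n ∧ n • x = 0}

/-!
Modulo a divisible subgroup `K`, every element of squarefree order `n` lifts to one of the same
order: if `n • y ∈ K`, pick `f ∈ K` with `n • f = n • y`, and `y - f` is a lift killed by `n`.
So `Soc(H/K)` is the image of `Soc(H)`, and the continuous quotient map carries the density of
`Soc(G)` over to `Soc(G/K)`.
-/

open Set

section

variable {H : Type*} [AddCommGroup H]

theorem AddMonoidHom.image_socSet_subset {H' : Type*} [AddCommGroup H'] (φ : H →+ H')
    (S : Set H) : φ '' socSet S ⊆ socSet (φ '' S) := by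
  rintro _ ⟨x, ⟨hxS, n, hn, hsq, hnx⟩, rfl⟩
  exact ⟨mem_image_of_mem φ hxS, n, hn, hsq, by rw [← map_nsmul, hnx, map_zero]⟩

theorem socSet_univ_quotient_subset_image {K : AddSubgroup H}
    (hdiv : ∀ k ∈ K, ∀ n : ℕ, 0 < n → ∃ f ∈ K, n • f = k) :
    socSet (univ : Set (H ⧸ K)) ⊆ QuotientAddGroup.mk '' socSet (univ : Set H) := by
  rintro x ⟨-, n, hn, hsq, hnx⟩
  obtain ⟨y, rfl⟩ := QuotientAddGroup.mk_surjective x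
  have hny : n • y ∈ K := by
    rwa [← QuotientAddGroup.eq_zero_iff, QuotientAddGroup.mk_nsmul]
  obtain ⟨f, hfK, hf⟩ := hdiv _ hny n hn
  refine ⟨y - f, ⟨trivial, n, hn, hsq, by rw [smul_sub, hf, sub_self]⟩, ?_⟩
  rw [QuotientAddGroup.mk_sub, (QuotientAddGroup.eq_zero_iff f).2 hfK, sub_zero]

end

theorem stmt_11_general {H : Type*} [AddCommGroup H] [TopologicalSpace H]
    (G K : AddSubgroup H)
    (hdiv : ∀ k ∈ K, ∀ n : ℕ, 0 < n → ∃ f ∈ K, n • f = k)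
    (hdense : socSet (Set.univ : Set H) ⊆ closure (socSet (G : Set H))) :
    socSet (Set.univ : Set (H ⧸ K)) ⊆
      closure (socSet ((G.map (QuotientAddGroup.mk' K) : AddSubgroup (H ⧸ K)) :
        Set (H ⧸ K))) :=
  calc socSet univ
      ⊆ QuotientAddGroup.mk '' socSet univ := socSet_univ_quotient_subset_image hdiv
    _ ⊆ QuotientAddGroup.mk '' closure (socSet G) := image_mono hdense
    _ ⊆ closure (QuotientAddGroup.mk '' socSet G) :=
        image_closure_subset_closure_image continuous_quot_mk
    _ ⊆ closure (socSet (G.map (QuotientAddGroup.mk' K))) := by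
        rw [AddSubgroup.coe_map]
        exact closure_mono ((QuotientAddGroup.mk' K).image_socSet_subset G)

/-- Let `H` be an abelian topological group, `G ≤ H` a subgroup with `Soc(G)` dense
in `Soc(H)`, and `K ≤ G` a divisible subgroup. Then `Soc(G/K)` is dense in
`Soc(H/K)` in the quotient topology on `H ⧸ K`. -/
theorem stmt_11 {H : Type*} [AddCommGroup H] [TopologicalSpace H]
    [IsTopologicalAddGroup H] (G K : AddSubgroup H) (hKG : K ≤ G)
    (hdiv : ∀ k ∈ K, ∀ n : ℕ, 0 < n → ∃ f ∈ K, n • f = k)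
    (hdense : socSet (Set.univ : Set H) ⊆ closure (socSet (G : Set H))) :
    socSet (Set.univ : Set (H ⧸ K)) ⊆
      closure (socSet ((G.map (QuotientAddGroup.mk' K) : AddSubgroup (H ⧸ K)) :
        Set (H ⧸ K))) :=
  stmt_11_general G K hdiv hdense
end

section
/- The Heisenberg-type group G over ℤ_p and ℚ_p contains no non-trivial discrete subgroup: for every element A ≠ e of G, the sequence A^{p^n} converges to the identity, so ⟨A⟩ is not discrete. -/
/-- The Heisenberg-type group of upper unitriangular 3×3 matrices
`[[1, b, a], [0, 1, c], [0, 0, 1]]` with `a ∈ ℚ_p` and `b, c ∈ ℤ_p`,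
recorded by its three free entries. -/
@[ext]
structure Heis (p : ℕ) [Fact p.Prime] where
  a : ℚ_[p]
  b : ℤ_[p]
  c : ℤ_[p]

namespace Heis

variable {p : ℕ} [Fact p.Prime]

/-- Matrix multiplication, in terms of the entries. -/
noncomputable instance : Mul (Heis p) :=
  ⟨fun x y => ⟨x.a + y.a + (x.b : ℚ_[p]) * (y.c : ℚ_[p]), x.b + y.b, x.c + y.c⟩⟩

noncomputable instance : One (Heis p) := ⟨⟨0, 0, 0⟩⟩

noncomputable instance : Inv (Heis p) :=
  ⟨fun x => ⟨-x.a + (x.b : ℚ_[p]) * (x.c : ℚ_[p]), -x.b, -x.c⟩⟩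

@[simp] theorem mul_a (x y : Heis p) :
    (x * y).a = x.a + y.a + (x.b : ℚ_[p]) * (y.c : ℚ_[p]) := rfl
@[simp] theorem mul_b (x y : Heis p) : (x * y).b = x.b + y.b := rfl
@[simp] theorem mul_c (x y : Heis p) : (x * y).c = x.c + y.c := rfl
@[simp] theorem one_a : (1 : Heis p).a = 0 := rfl
@[simp] theorem one_b : (1 : Heis p).b = 0 := rfl
@[simp] theorem one_c : (1 : Heis p).c = 0 := rfl
@[simp] theorem inv_a (x : Heis p) :
    x⁻¹.a = -x.a + (x.b : ℚ_[p]) * (x.c : ℚ_[p]) := rfl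
@[simp] theorem inv_b (x : Heis p) : x⁻¹.b = -x.b := rfl
@[simp] theorem inv_c (x : Heis p) : x⁻¹.c = -x.c := rfl

noncomputable instance : Group (Heis p) :=
  Group.ofLeftAxioms
    (fun x y z => by ext <;> simp <;> push_cast <;> ring)
    (fun x => by ext <;> simp)
    (fun x => by ext <;> simp <;> push_cast <;> ring)

/-- The topology inherited from `ℚ_p × ℤ_p × ℤ_p` (equivalently from `ℚ_p³`). -/
noncomputable instance : TopologicalSpace (Heis p) :=
  TopologicalSpace.induced (fun x : Heis p => (x.a, x.b, x.c)) inferInstance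

end Heis

/-!
Powers in `G` are explicit: `(A ^ n).b = n b`, `(A ^ n).c = n c` and
`(A ^ n).a = n a + n (n - 1) / 2 · b c`, polynomial in `n` without constant term.
Since `p ^ k → 0` `p`-adically, `A ^ (p ^ k) → 1`. The same formulas show that `G` is
torsion-free, so a discrete subgroup, in which `A ^ (p ^ k)` is eventually `1`, is trivial.
-/

open Filter Topology

theorem PadicInt.norm_p_lt_one {p : ℕ} [Fact p.Prime] : ‖(p : ℤ_[p])‖ < 1 := by
  simpa [PadicInt.norm_def] using Padic.norm_p_lt_one (p := p)

theorem Subgroup.eq_bot_of_tendsto_pow_nhds_one {G : Type*} [Group G] [TopologicalSpace G]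
    [IsMulTorsionFree G] {u : ℕ → ℕ} (hu : ∀ k, u k ≠ 0) (H : Subgroup G) [DiscreteTopology H]
    (h : ∀ g ∈ H, Tendsto (fun k => g ^ u k) atTop (𝓝 1)) : H = ⊥ := by
  refine (Subgroup.eq_bot_iff_forall H).2 fun g hg => ?_
  have hH : Tendsto (fun k => (⟨g, hg⟩ : H) ^ u k) atTop (𝓝 1) :=
    tendsto_subtype_rng.2 (h g hg)
  rw [nhds_discrete, tendsto_pure] at hH
  obtain ⟨k, hk⟩ := hH.exists
  exact (pow_eq_one_iff_left (hu k)).1 (congrArg Subtype.val hk)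

namespace Heis

variable {p : ℕ} [Fact p.Prime]

theorem pow_b (A : Heis p) (n : ℕ) : (A ^ n).b = n * A.b := by
  induction n with
  | zero => simp
  | succ n ih => rw [pow_succ, mul_b, ih]; push_cast; ring

theorem pow_c (A : Heis p) (n : ℕ) : (A ^ n).c = n * A.c := by
  induction n with
  | zero => simp
  | succ n ih => rw [pow_succ, mul_c, ih]; push_cast; ring

theorem pow_a (A : Heis p) (n : ℕ) :
    (A ^ n).a = n * A.a + n * (n - 1) / 2 * A.b * A.c := by
  induction n with
  | zero => simp
  | succ n ih => rw [pow_succ, mul_a, ih, pow_b]; push_cast; ring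

instance : IsMulTorsionFree (Heis p) where
  pow_left_injective n hn A B hAB := by
    dsimp only at hAB
    have hb : A.b = B.b := mul_left_cancel₀ (Nat.cast_ne_zero.2 hn) <| by
      simpa only [pow_b] using congrArg b hAB
    have hc : A.c = B.c := mul_left_cancel₀ (Nat.cast_ne_zero.2 hn) <| by
      simpa only [pow_c] using congrArg c hAB
    have ha : A.a = B.a := mul_left_cancel₀ (Nat.cast_ne_zero.2 hn) <| add_right_cancel <| by
      simpa only [pow_a, hb, hc] using congrArg a hAB
    exact Heis.ext ha hb hc

theorem tendsto_pow_prime_pow_nhds_one (A : Heis p) :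
    Tendsto (fun k : ℕ => A ^ p ^ k) atTop (𝓝 1) := by
  have hQ : Tendsto (fun k : ℕ => ((p ^ k : ℕ) : ℚ_[p])) atTop (𝓝 0) := by
    simpa using tendsto_pow_atTop_nhds_zero_of_norm_lt_one Padic.norm_p_lt_one
  have hZ : Tendsto (fun k : ℕ => ((p ^ k : ℕ) : ℤ_[p])) atTop (𝓝 0) := by
    simpa using tendsto_pow_atTop_nhds_zero_of_norm_lt_one PadicInt.norm_p_lt_one
  have ha : Continuous fun x : ℚ_[p] => x * A.a + x * (x - 1) / 2 * A.b * A.c := by fun_prop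
  rw [nhds_induced, tendsto_comap_iff]
  refine Tendsto.prodMk_nhds ?_ (Tendsto.prodMk_nhds ?_ ?_)
  · simpa [Function.comp_def, pow_a] using (ha.tendsto 0).comp hQ
  · simpa [Function.comp_def, pow_b] using hZ.mul_const A.b
  · simpa [Function.comp_def, pow_c] using hZ.mul_const A.c

end Heis

/-- In the Heisenberg-type group over `ℚ_p`, `ℤ_p`, for every element `A` the
sequence `A ^ (p ^ n)` converges to the identity; consequently every non-trivial
subgroup is non-discrete, i.e. the group contains no non-trivial discrete
subgroup. -/
theorem stmt_18 (p : ℕ) [Fact p.Prime] :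
    (∀ A : Heis p,
      Filter.Tendsto (fun n : ℕ => A ^ (p ^ n)) Filter.atTop (nhds 1)) ∧
    ∀ H : Subgroup (Heis p), H ≠ ⊥ → ¬ DiscreteTopology H :=
  ⟨Heis.tendsto_pow_prime_pow_nhds_one, fun H hH _ =>
    hH (H.eq_bot_of_tendsto_pow_nhds_one (fun _ => pow_ne_zero _ (Fact.out : p.Prime).ne_zero)
      fun A _ => A.tendsto_pow_prime_pow_nhds_one)⟩
end
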